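/- arXiv:2011.03633 — 4 statements merged into one kernel-verified Lean document; each statement's English description precedes it below -/
import Mathlib

section
/- Let s, s_q, c, c₁, c₂ be positive integers, let Q ∈ ℝ^{s_q×c₁} be a fixed (learned) query matrix independent of the input, let W_k ∈ ℝ^{c×c₁} and W_v ∈ ℝ^{c×c₂} be fixed weight matrices, and define the learned-query attention operator A_Q on matrices X ∈ ℝ^{s×c} by A_Q(X) = (1/s) · (Q · (X·W_k)ᵀ) · (X·W_v). Then A_Q is spatially permutation invariant: for every permutation π of {1,…,s} with permutation matrix P_π ∈ ℝ^{s×s}, and every X ∈ ℝ^{s×c}, A_Q(P_π·X) = A_Q(X). -/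
open Matrix

/-- The permutation matrix of a permutation `π`, whose `i`-th row is the
standard basis vector `e_{π i}`. -/
noncomputable def permMatrix {n : Type*} [DecidableEq n] (π : Equiv.Perm n) :
    Matrix n n ℝ :=
  Matrix.of fun i j => if π i = j then (1 : ℝ) else 0

/-- The attention operator with a directly learned query `Q` (independent of the
input), normalized by division by the spatial size `s`:
`A_Q(X) = (1/s) · (Q · (X·W_k)ᵀ) · (X·W_v)`. -/
noncomputable def learnedQueryAttn {s sq c c₁ c₂ : ℕ}
    (Q : Matrix (Fin sq) (Fin c₁) ℝ)
    (Wk : Matrix (Fin c) (Fin c₁) ℝ) (Wv : Matrix (Fin c) (Fin c₂) ℝ)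
    (X : Matrix (Fin s) (Fin c) ℝ) : Matrix (Fin sq) (Fin c₂) ℝ :=
  ((s : ℝ)⁻¹) • ((Q * (X * Wk)ᵀ) * (X * Wv))

theorem permMatrix_transpose_mul_self {n : Type*} [DecidableEq n] [Fintype n]
    (π : Equiv.Perm n) : (permMatrix π)ᵀ * permMatrix π = 1 := by
  ext i j
  simp only [Matrix.mul_apply, transpose_apply, permMatrix, Matrix.of_apply,
    Matrix.one_apply, ite_mul, one_mul, zero_mul]
  rw [Finset.sum_eq_single (π.symm i)]
  · simp [Equiv.apply_symm_apply, eq_comm, π.symm.injective.eq_iff,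
      ← Equiv.symm_apply_eq]
  · intro k _ hk
    have : ¬ π k = i := fun h => hk (by simp [← h])
    simp [this]
  · simp

/-- Part 2 of Theorem 1: attention with a learned query is spatially
permutation invariant. -/
theorem learnedQueryAttn_permutation_invariant
    (s sq c c₁ c₂ : ℕ) (hs : 0 < s) (hsq : 0 < sq) (hc : 0 < c)
    (hc₁ : 0 < c₁) (hc₂ : 0 < c₂)
    (Q : Matrix (Fin sq) (Fin c₁) ℝ)
    (Wk : Matrix (Fin c) (Fin c₁) ℝ) (Wv : Matrix (Fin c) (Fin c₂) ℝ)
    (π : Equiv.Perm (Fin s)) (X : Matrix (Fin s) (Fin c) ℝ) :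
    learnedQueryAttn Q Wk Wv (permMatrix π * X) = learnedQueryAttn Q Wk Wv X := by
  unfold learnedQueryAttn
  congr 1
  rw [show (permMatrix π * X * Wk)ᵀ = (X * Wk)ᵀ * (permMatrix π)ᵀ by
    rw [Matrix.mul_assoc, transpose_mul]]
  simp only [Matrix.mul_assoc]
  rw [← Matrix.mul_assoc (permMatrix π)ᵀ, permMatrix_transpose_mul_self,
    Matrix.one_mul]
end

section
/- Let s, r, c, c₁, c₂ be positive integers, let R ∈ ℝ^{r×c} be a fixed (learned) shared-reference matrix, and let W_q, W_k ∈ ℝ^{c×c₁} and W_v ∈ ℝ^{c×c₂} be fixed weight matrices. For X ∈ ℝ^{s×c}, let X̃ ∈ ℝ^{(r+s)×c} denote the vertical concatenation of R on top of X, and define the shared-reference attention operator A_R by A_R(X) = (1/(r+s)) · ((X·W_q) · (X̃·W_k)ᵀ) · (X̃·W_v). Then A_R is spatially permutation equivariant: for every permutation π of {1,…,s} with permutation matrix P_π ∈ ℝ^{s×s}, and every X ∈ ℝ^{s×c}, A_R(P_π·X) = P_π·A_R(X). -/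
open Matrix

/-- The attention operator augmented with shared references `R`, normalized by
division by `r + s`: with `X̃` the vertical concatenation of `R` on top of `X`,
`A_R(X) = (1/(r+s)) · ((X·W_q) · (X̃·W_k)ᵀ) · (X̃·W_v)`. -/
noncomputable def sharedRefAttn {s r c c₁ c₂ : ℕ}
    (R : Matrix (Fin r) (Fin c) ℝ)
    (Wq Wk : Matrix (Fin c) (Fin c₁) ℝ) (Wv : Matrix (Fin c) (Fin c₂) ℝ)
    (X : Matrix (Fin s) (Fin c) ℝ) : Matrix (Fin s) (Fin c₂) ℝ :=
  let Xt : Matrix (Fin r ⊕ Fin s) (Fin c) ℝ := Matrix.fromRows R X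
  (((r : ℝ) + (s : ℝ))⁻¹) • (((X * Wq) * (Xt * Wk)ᵀ) * (Xt * Wv))

/-- A permutation matrix is orthogonal: `Pᵀ * P = 1`. -/
lemma permMatrix_orth {n : Type*} [Fintype n] [DecidableEq n] (π : Equiv.Perm n) :
    (permMatrix π)ᵀ * permMatrix π = 1 := by
  ext i j
  simp only [permMatrix, mul_apply, transpose_apply, of_apply, one_apply]
  rw [Fintype.sum_eq_single (π.symm i)]
  · simp [Equiv.apply_eq_iff_eq_symm_apply, eq_comm]
  · intro k hk
    rw [if_neg, zero_mul]
    intro h; exact hk (by simpa using congrArg π.symm h)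

/-- Theorem 2: the attention operator augmented with shared references is
spatially permutation equivariant. -/
theorem sharedRefAttn_permutation_equivariant
    (s r c c₁ c₂ : ℕ) (hs : 0 < s) (hr : 0 < r) (hc : 0 < c)
    (hc₁ : 0 < c₁) (hc₂ : 0 < c₂)
    (R : Matrix (Fin r) (Fin c) ℝ)
    (Wq Wk : Matrix (Fin c) (Fin c₁) ℝ) (Wv : Matrix (Fin c) (Fin c₂) ℝ)
    (π : Equiv.Perm (Fin s)) (X : Matrix (Fin s) (Fin c) ℝ) :
    sharedRefAttn R Wq Wk Wv (permMatrix π * X) =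
      permMatrix π * sharedRefAttn R Wq Wk Wv X := by
  set P := permMatrix π with hP
  -- the Gram matrix of the augmented input is invariant under permutation
  have hgram : (Matrix.fromRows R (P * X))ᵀ * Matrix.fromRows R (P * X)
      = (Matrix.fromRows R X)ᵀ * Matrix.fromRows R X := by
    rw [Matrix.transpose_fromRows, Matrix.transpose_fromRows,
      Matrix.fromCols_mul_fromRows, Matrix.fromCols_mul_fromRows,
      Matrix.transpose_mul, Matrix.mul_assoc Xᵀ, ← Matrix.mul_assoc Pᵀ,
      permMatrix_orth, Matrix.one_mul]
  unfold sharedRefAttn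
  simp only [Matrix.mul_smul, Matrix.transpose_mul]
  congr 1
  calc P * X * Wq * (Wkᵀ * (Matrix.fromRows R (P * X))ᵀ) *
        (Matrix.fromRows R (P * X) * Wv)
      = P * ((X * Wq * Wkᵀ) *
        ((Matrix.fromRows R (P * X))ᵀ * Matrix.fromRows R (P * X)) * Wv) := by
        simp only [Matrix.mul_assoc]
    _ = P * ((X * Wq * Wkᵀ) *
        ((Matrix.fromRows R X)ᵀ * Matrix.fromRows R X) * Wv) := by rw [hgram]
    _ = P * (X * Wq * (Wkᵀ * (Matrix.fromRows R X)ᵀ) *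
        (Matrix.fromRows R X * Wv)) := by simp only [Matrix.mul_assoc]
end

section
/- Let N, s, c, c₁, c₂ be positive integers, let W_q, W_k ∈ ℝ^{c×c₁} and W_v ∈ ℝ^{c×c₂} be fixed weight matrices, and for a batch of matrices X₁,…,X_N ∈ ℝ^{s×c} let Stack(X₁,…,X_N) ∈ ℝ^{Ns×c} denote their vertical concatenation. Define the batch-aware attention operator A_batch(X_i; X₁,…,X_N) = (1/(Ns)) · ((X_i·W_q) · (Stack(X₁,…,X_N)·W_k)ᵀ) · (Stack(X₁,…,X_N)·W_v). Then A_batch is equivariant to spatial permutations of the queried instance: for every permutation π of {1,…,s} with permutation matrix P_π ∈ ℝ^{s×s}, every batch X₁,…,X_N, and every index i, replacing X_i by P_π·X_i (both as the query input and in the batch) gives A_batch(P_π·X_i; X₁,…,P_π·X_i,…,X_N) = P_π · A_batch(X_i; X₁,…,X_N). -/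
open Matrix

/-- The vertical concatenation `Stack(X₁,…,X_N)` of a batch of `N` matrices of
shape `s × c`, placing the rows of `X₁,…,X_N` in order (indexed by
`Fin N × Fin s`). -/
noncomputable def stackBatch {N s c : ℕ}
    (X : Fin N → Matrix (Fin s) (Fin c) ℝ) :
    Matrix (Fin N × Fin s) (Fin c) ℝ :=
  Matrix.of fun p j => X p.1 p.2 j

/-- The batch-aware attention operator: the query comes from the instance `X i`
while key and value cover the whole batch, normalized by the total spatial size
`N·s`. -/
noncomputable def batchAttn {N s c c₁ c₂ : ℕ}
    (Wq Wk : Matrix (Fin c) (Fin c₁) ℝ) (Wv : Matrix (Fin c) (Fin c₂) ℝ)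
    (X : Fin N → Matrix (Fin s) (Fin c) ℝ) (i : Fin N) :
    Matrix (Fin s) (Fin c₂) ℝ :=
  (((N : ℝ) * (s : ℝ))⁻¹) •
    (((X i * Wq) * (stackBatch X * Wk)ᵀ) * (stackBatch X * Wv))

/-!
Replacing `X i` by `P_π X i` inside the batch permutes the rows of the stack by the
block-diagonal permutation `(j, t) ↦ (j, (if j = i then π else id) t)`. A common row
permutation of keys `K` and values `V` cancels in `Kᵀ V`, so only the row permutation
of the query survives.
-/

lemma permMatrix_eq_perm_permMatrix {n : Type*} [DecidableEq n] (π : Equiv.Perm n) :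
    permMatrix π = π.permMatrix ℝ := by
  ext i j
  simp [permMatrix, PEquiv.toMatrix_apply]

lemma permMatrix_mul_eq_submatrix {n m : Type*} [DecidableEq n] [Fintype n] (π : Equiv.Perm n)
    (A : Matrix n m ℝ) : permMatrix π * A = A.submatrix π id := by
  rw [permMatrix_eq_perm_permMatrix, PEquiv.toMatrix_toPEquiv_mul]

lemma submatrix_id_mul {α l m n p : Type*} [Fintype n] [Mul α] [AddCommMonoid α]
    (A : Matrix m n α) (B : Matrix n p α) (e : l → m) :
    A.submatrix e id * B = (A * B).submatrix e id :=
  rfl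

lemma transpose_submatrix_mul_submatrix {α p q m n : Type*} [Fintype p] [Fintype q]
    [Mul α] [AddCommMonoid α] (σ : p ≃ q) (A : Matrix q m α) (B : Matrix q n α) :
    (A.submatrix σ id)ᵀ * B.submatrix σ id = Aᵀ * B := by
  rw [transpose_submatrix, submatrix_mul_equiv, submatrix_id_id]

lemma update_permMatrix_mul_eq_submatrix {ι n m : Type*} [DecidableEq ι] [DecidableEq n]
    [Fintype n] (X : ι → Matrix n m ℝ) (i : ι) (π : Equiv.Perm n) :
    Function.update X i (permMatrix π * X i) =
      fun j => (X j).submatrix ((Pi.mulSingle i π : ι → Equiv.Perm n) j) id := by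
  funext j
  rcases eq_or_ne j i with rfl | hj
  · simp [permMatrix_mul_eq_submatrix]
  · simp [hj]

lemma stackBatch_submatrix_prodCongrRight {N s c : ℕ} (X : Fin N → Matrix (Fin s) (Fin c) ℝ)
    (τ : Fin N → Equiv.Perm (Fin s)) :
    stackBatch (fun j => (X j).submatrix (τ j) id) =
      (stackBatch X).submatrix (Equiv.prodCongrRight τ) id :=
  rfl

theorem batchAttn_permutation_equivariant_general
    (N s c c₁ c₂ : ℕ)
    (Wq Wk : Matrix (Fin c) (Fin c₁) ℝ) (Wv : Matrix (Fin c) (Fin c₂) ℝ)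
    (X : Fin N → Matrix (Fin s) (Fin c) ℝ) (i : Fin N)
    (π : Equiv.Perm (Fin s)) :
    batchAttn Wq Wk Wv (Function.update X i (permMatrix π * X i)) i =
      permMatrix π * batchAttn Wq Wk Wv X i := by
  have hstack : stackBatch (Function.update X i (permMatrix π * X i)) =
      (stackBatch X).submatrix (Equiv.prodCongrRight (Pi.mulSingle i π)) id := by
    rw [update_permMatrix_mul_eq_submatrix, stackBatch_submatrix_prodCongrRight]
  rw [batchAttn, batchAttn, hstack, submatrix_id_mul, submatrix_id_mul,
    Function.update_self, Matrix.mul_smul]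
  simp only [Matrix.mul_assoc, transpose_submatrix_mul_submatrix]

/-- Batch-aware attention is equivariant to spatial permutations of the queried
instance: replacing `X i` by `P_π · X i`, both as the query input and within
the batch, permutes the output by `P_π`. -/
theorem batchAttn_permutation_equivariant
    (N s c c₁ c₂ : ℕ) (hN : 0 < N) (hs : 0 < s) (hc : 0 < c)
    (hc₁ : 0 < c₁) (hc₂ : 0 < c₂)
    (Wq Wk : Matrix (Fin c) (Fin c₁) ℝ) (Wv : Matrix (Fin c) (Fin c₂) ℝ)
    (X : Fin N → Matrix (Fin s) (Fin c) ℝ) (i : Fin N)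
    (π : Equiv.Perm (Fin s)) :
    batchAttn Wq Wk Wv (Function.update X i (permMatrix π * X i)) i =
      permMatrix π * batchAttn Wq Wk Wv X i :=
  batchAttn_permutation_equivariant_general N s c c₁ c₂ Wq Wk Wv X i π
end

section
/- Let s, s_q, c, c₁, c₂ be positive integers, let Q ∈ ℝ^{s_q×c₁} be a fixed (learned) query matrix independent of the input, let W_k ∈ ℝ^{c×c₁} and W_v ∈ ℝ^{c×c₂} be fixed weight matrices, and define the softmax-normalized learned-query attention operator on X ∈ ℝ^{s×c} by A_Q(X) = softmax(Q · (X·W_k)ᵀ) · (X·W_v), where softmax is applied row-wise: (softmax M)_{ij} = exp(M_{ij}) / ∑_k exp(M_{ik}). Then A_Q is spatially permutation invariant: for every permutation π of {1,…,s} with permutation matrix P_π ∈ ℝ^{s×s}, and every X ∈ ℝ^{s×c}, A_Q(P_π·X) = A_Q(X). -/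
open Matrix

/-- The row-wise softmax of a matrix:
`(softmax A) i j = exp (A i j) / ∑ k, exp (A i k)`. -/
noncomputable def softmax {m n : Type*} [Fintype n] (A : Matrix m n ℝ) :
    Matrix m n ℝ :=
  Matrix.of fun i j => Real.exp (A i j) / ∑ k, Real.exp (A i k)

/-- The softmax-normalized attention operator with a directly learned query `Q`
(independent of the input): `A_Q(X) = softmax(Q · (X·W_k)ᵀ) · (X·W_v)`. -/
noncomputable def softmaxLearnedQueryAttn {s sq c c₁ c₂ : ℕ}
    (Q : Matrix (Fin sq) (Fin c₁) ℝ)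
    (Wk : Matrix (Fin c) (Fin c₁) ℝ) (Wv : Matrix (Fin c) (Fin c₂) ℝ)
    (X : Matrix (Fin s) (Fin c) ℝ) : Matrix (Fin sq) (Fin c₂) ℝ :=
  softmax (Q * (X * Wk)ᵀ) * (X * Wv)

lemma permMatrix_mul {s c : ℕ} (π : Equiv.Perm (Fin s))
    (X : Matrix (Fin s) (Fin c) ℝ) (i : Fin s) (j : Fin c) :
    (permMatrix π * X) i j = X (π i) j := by
  simp [permMatrix, Matrix.mul_apply]

/-- Softmax-normalized attention with a learned query is spatially permutation
invariant. -/
theorem softmaxLearnedQueryAttn_permutation_invariant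
    (s sq c c₁ c₂ : ℕ) (hs : 0 < s) (hsq : 0 < sq) (hc : 0 < c)
    (hc₁ : 0 < c₁) (hc₂ : 0 < c₂)
    (Q : Matrix (Fin sq) (Fin c₁) ℝ)
    (Wk : Matrix (Fin c) (Fin c₁) ℝ) (Wv : Matrix (Fin c) (Fin c₂) ℝ)
    (π : Equiv.Perm (Fin s)) (X : Matrix (Fin s) (Fin c) ℝ) :
    softmaxLearnedQueryAttn Q Wk Wv (permMatrix π * X) =
      softmaxLearnedQueryAttn Q Wk Wv X := by
  have hPX : permMatrix π * X = Matrix.of fun i j => X (π i) j := by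
    ext i j; simp [permMatrix, Matrix.mul_apply]
  have hM : ∀ i j, (Q * (permMatrix π * X * Wk)ᵀ) i j
      = (Q * (X * Wk)ᵀ) i (π j) := by
    intro i j
    simp [hPX, Matrix.mul_apply, Finset.mul_sum]
  ext i l
  simp only [softmaxLearnedQueryAttn, Matrix.mul_apply]
  rw [← Equiv.sum_comp π (fun j => softmax (Q * (X * Wk)ᵀ) i j * ∑ k, X j k * Wv k l)]
  refine Finset.sum_congr rfl fun j _ => ?_
  congr 1
  · simp only [softmax, Matrix.of_apply, hM]
    congr 1
    exact Equiv.sum_comp π (fun k => Real.exp ((Q * (X * Wk)ᵀ) i k))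
  · refine Finset.sum_congr rfl fun k _ => ?_
    congr 1
    simp [permMatrix]
end
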